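/- Let H be a subgroup of G. The following are equivalent: (1) there exists a state m on ℓ∞(G) with J¹(G,H) ⊆ Ann_L(m); (2) there exists a state m on ℓ∞(G) with J¹(G,H) + ℂ·ε ⊆ Inv_L(m); (3) ℓ∞(G/H) is relatively amenable. -/

import Mathlib

/-!
For `f ∈ J¹(G,H)` one has `f(1) = 0` and `(f + cε) * m = f * m + c m`, so conditions (1) and (2)
say the same thing.

Given a state `m` annihilated by `J¹(G,H)`, take `E x = m * x`. It is a unital positive module map,
and its values are right `H`-invariant because `δ_{sh} - δ_s ∈ J¹(G,H)`. Conversely, from `E` take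
the state `m x = (E x)(e)`: then `(f * m)(x) = m (x * f) = (E x * f)(e) = f(E x)`, which vanishes
for `f ∈ J¹(G,H)` since `E x ∈ ℓ∞(G/H)`. This `m` is bounded because it is positive and unital:
`‖x‖ · 1 ± x ≥ 0` for real-valued `x`, and a general `x` splits into real and imaginary parts.
-/

set_option linter.unusedSectionVars false

open scoped ENNReal ComplexOrder

noncomputable section

namespace QG

variable {G : Type*} [Group G]

/-- `ℓ∞(G)`: bounded complex functions on `G`. -/
abbrev Linf (G : Type*) : Type _ := lp (fun _ : G => ℂ) ∞

/-- `ℓ¹(G)`: summable complex functions on `G`. -/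
abbrev L1 (G : Type*) : Type _ := lp (fun _ : G => ℂ) 1

/-- The dual space `ℓ∞(G)*`. -/
abbrev DualLinf (G : Type*) : Type _ := StrongDual ℂ (Linf G)

lemma summable_norm (f : L1 G) : Summable fun s => ‖f s‖ := by
  have h := (lp.memℓp f).summable (by simp)
  simpa using h

lemma norm_apply_le (x : Linf G) (s : G) : ‖x s‖ ≤ ‖x‖ :=
  lp.norm_apply_le_norm ENNReal.top_ne_zero x s

/-- The constant function `1` in `ℓ∞(G)`. -/
def one' : Linf G :=
  ⟨fun _ => (1 : ℂ), memℓp_infty ⟨1, by rintro r ⟨t, rfl⟩; simp⟩⟩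

/-- Left translation: `(L_s x)(t) = x (s * t)`. -/
def Ltrans (s : G) (x : Linf G) : Linf G :=
  ⟨fun t => x (s * t),
    memℓp_infty (BddAbove.mono (by rintro r ⟨t, rfl⟩; exact ⟨s * t, rfl⟩) (lp.memℓp x).bddAbove)⟩

@[simp] lemma Ltrans_apply (s : G) (x : Linf G) (t : G) : Ltrans s x t = x (s * t) := rfl

lemma norm_Ltrans_le (s : G) (x : Linf G) : ‖Ltrans s x‖ ≤ ‖x‖ := by
  rw [lp.norm_eq_ciSup]
  exact ciSup_le fun t => norm_apply_le x (s * t)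

/-- The action `m * x` of `m ∈ ℓ∞(G)*` on `x ∈ ℓ∞(G)`: `(m*x)(s) = m (L_s x)`. -/
def starAct (m : DualLinf G) (x : Linf G) : Linf G :=
  ⟨fun s => m (Ltrans s x),
    memℓp_infty ⟨‖m‖ * ‖x‖, by
      rintro r ⟨s, rfl⟩
      calc ‖m (Ltrans s x)‖ ≤ ‖m‖ * ‖Ltrans s x‖ := m.le_opNorm _
        _ ≤ ‖m‖ * ‖x‖ :=
          mul_le_mul_of_nonneg_left (norm_Ltrans_le s x) (norm_nonneg m)⟩⟩

@[simp] lemma starAct_apply (m : DualLinf G) (x : Linf G) (s : G) :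
    starAct m x s = m (Ltrans s x) := rfl

lemma summable_mul_bound (f : L1 G) (x : Linf G) (t : G) :
    Summable fun s => ‖f s * x (s * t)‖ := by
  refine Summable.of_nonneg_of_le (fun s => norm_nonneg _) (fun s => ?_)
    ((summable_norm f).mul_right ‖x‖)
  rw [norm_mul]
  exact mul_le_mul_of_nonneg_left (norm_apply_le x (s * t)) (norm_nonneg _)

/-- The right action of `ℓ¹(G)` on `ℓ∞(G)`: `(x * f)(t) = ∑_s f s * x (s * t)`. -/
def rAct (x : Linf G) (f : L1 G) : Linf G :=
  ⟨fun t => ∑' s, f s * x (s * t),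
    memℓp_infty ⟨(∑' s, ‖f s‖) * ‖x‖, by
      rintro r ⟨t, rfl⟩
      calc ‖∑' s, f s * x (s * t)‖ ≤ ∑' s, ‖f s * x (s * t)‖ :=
            norm_tsum_le_tsum_norm (summable_mul_bound f x t)
        _ ≤ ∑' s, ‖f s‖ * ‖x‖ :=
            Summable.tsum_le_tsum (fun s => by
                rw [norm_mul]
                exact mul_le_mul_of_nonneg_left (norm_apply_le x (s * t)) (norm_nonneg _))
              (summable_mul_bound f x t) ((summable_norm f).mul_right _)
        _ = (∑' s, ‖f s‖) * ‖x‖ := tsum_mul_right⟩⟩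

@[simp] lemma rAct_apply (x : Linf G) (f : L1 G) (t : G) :
    rAct x f t = ∑' s, f s * x (s * t) := rfl

/-- The shear equivalence of `G × G`. -/
def shearEquiv (G : Type*) [Group G] : G × G ≃ G × G where
  toFun p := (p.2, p.2⁻¹ * p.1)
  invFun p := (p.1 * p.2, p.1)
  left_inv p := by simp
  right_inv p := by simp

lemma conv_prod_summable (f g : L1 G) :
    Summable fun p : G × G => ‖f p.2‖ * ‖g (p.2⁻¹ * p.1)‖ := by
  have h0 : Summable fun p : G × G => ‖f p.1‖ * ‖g p.2‖ :=
    (summable_norm f).mul_of_nonneg (summable_norm g) (fun _ => norm_nonneg _)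
      (fun _ => norm_nonneg _)
  have key : Summable ((fun p : G × G => ‖f p.1‖ * ‖g p.2‖) ∘ (shearEquiv G)) :=
    (shearEquiv G).summable_iff.mpr h0
  have heq : ((fun p : G × G => ‖f p.1‖ * ‖g p.2‖) ∘ (shearEquiv G)) =
      fun p : G × G => ‖f p.2‖ * ‖g (p.2⁻¹ * p.1)‖ := by
    funext p
    simp [shearEquiv, Function.comp]
  rwa [heq] at key

lemma conv_memℓp (f g : L1 G) : Memℓp (fun t : G => ∑' s, f s * g (s⁻¹ * t)) 1 := by
  have hp := conv_prod_summable f g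
  obtain ⟨h1, h2⟩ :=
    (summable_prod_of_nonneg (fun p => mul_nonneg (norm_nonneg _) (norm_nonneg _))).1 hp
  apply memℓp_gen
  simp only [ENNReal.toReal_one, Real.rpow_one]
  refine Summable.of_nonneg_of_le (fun t => norm_nonneg _) (fun t => ?_) h2
  calc ‖∑' s, f s * g (s⁻¹ * t)‖ ≤ ∑' s, ‖f s * g (s⁻¹ * t)‖ :=
        norm_tsum_le_tsum_norm (by simpa only [norm_mul] using h1 t)
    _ = ∑' s, ‖f s‖ * ‖g (s⁻¹ * t)‖ := tsum_congr fun s => norm_mul _ _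

/-- Convolution on `ℓ¹(G)`: `(f * g)(t) = ∑_s f s * g (s⁻¹ t)`. -/
def conv (f g : L1 G) : L1 G :=
  ⟨fun t => ∑' s, f s * g (s⁻¹ * t), conv_memℓp f g⟩

@[simp] lemma conv_apply (f g : L1 G) (t : G) : conv f g t = ∑' s, f s * g (s⁻¹ * t) := rfl

open Classical in
/-- The unit `ε = δ_e` of the convolution algebra `ℓ¹(G)`. -/
def eps : L1 G :=
  ⟨fun t => if t = 1 then 1 else 0, by
    apply memℓp_gen
    refine summable_of_ne_finset_zero (s := ({1} : Finset G)) ?_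
    intro t ht
    simp only [Finset.mem_singleton] at ht
    simp [ht]⟩

open Classical in
/-- Multiplication by the indicator function of `H`: `f · 1_H`. -/
def mulIndic (H : Subgroup G) (f : L1 G) : L1 G :=
  ⟨fun s => if s ∈ H then f s else 0, by
    apply memℓp_gen
    simp only [ENNReal.toReal_one, Real.rpow_one]
    refine Summable.of_nonneg_of_le (fun s => norm_nonneg _) (fun s => ?_) (summable_norm f)
    by_cases h : s ∈ H <;> simp [h]⟩

open Classical in
/-- The indicator function `1_H ∈ ℓ∞(G)` of a subgroup `H`. -/
def indic (H : Subgroup G) : Linf G :=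
  ⟨fun s => if s ∈ H then 1 else 0,
    memℓp_infty ⟨1, by rintro r ⟨s, rfl⟩; by_cases h : s ∈ H <;> simp [h]⟩⟩

/-- A state on `ℓ∞(G)`: unital positive functional. -/
def IsState (m : DualLinf G) : Prop :=
  m one' = 1 ∧ ∀ x : Linf G, (∀ s, 0 ≤ x s) → 0 ≤ m x

/-- `f ∈ Ann_L(m)`, i.e. `f * m = 0`. -/
def memAnnL (m : DualLinf G) (f : L1 G) : Prop :=
  ∀ x : Linf G, ∑' s, f s * m (Ltrans s x) = 0

/-- `f ∈ Inv_L(m, x₀)`, i.e. `f * m = f(x₀) · m`. -/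
def memInvLx (m : DualLinf G) (x₀ : Linf G) (f : L1 G) : Prop :=
  ∀ x : Linf G, ∑' s, f s * m (Ltrans s x) = (∑' s, f s * x₀ s) * m x

/-- `f ∈ Inv_L(m)`, i.e. `f * m = f(1) · m`. -/
def memInvL (m : DualLinf G) (f : L1 G) : Prop :=
  ∀ x : Linf G, ∑' s, f s * m (Ltrans s x) = (∑' s, f s) * m x

/-- A right idempotent state: a state with `m (m * x) = m x` for all `x`. -/
def IsRightIdempotentState (m : DualLinf G) : Prop :=
  IsState m ∧ ∀ x : Linf G, m (starAct m x) = m x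

/-- A character of `G` in `ℓ∞(G)`. -/
def IsCharacter (x : Linf G) : Prop :=
  (∀ s t : G, x (s * t) = x s * x t) ∧ ∀ s : G, ‖x s‖ = 1

/-- `ℓ∞(G/H)`, the right-`H`-invariant elements of `ℓ∞(G)`. -/
def LinfQuot (H : Subgroup G) : Set (Linf G) :=
  {x | ∀ s : G, ∀ h ∈ H, x (s * h) = x s}

/-- `J¹(G,H)`, the preannihilator of `ℓ∞(G/H)` in `ℓ¹(G)`. -/
def J1 (H : Subgroup G) : Set (L1 G) :=
  {f | ∀ x ∈ LinfQuot H, ∑' s, f s * x s = 0}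

/-- `E` witnesses relative amenability of `ℓ∞(G/H)`: a unital positive
`ℓ¹(G)`-module map `ℓ∞(G) → ℓ∞(G)` with range inside `ℓ∞(G/H)`. -/
def IsRelAmenMap (H : Subgroup G) (E : Linf G →ₗ[ℂ] Linf G) : Prop :=
  E one' = one' ∧
  (∀ x : Linf G, (∀ s, 0 ≤ x s) → ∀ s, 0 ≤ E x s) ∧
  (∀ x : Linf G, E x ∈ LinfQuot H) ∧
  (∀ (x : Linf G) (f : L1 G), E (rAct x f) = rAct (E x) f)

/-- `ℓ∞(G/H)` is relatively amenable. -/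
def RelAmen (H : Subgroup G) : Prop :=
  ∃ E : Linf G →ₗ[ℂ] Linf G, IsRelAmenMap H E

/-- `ℓ∞(G/H)` is amenable. -/
def Amen (H : Subgroup G) : Prop :=
  ∃ E : Linf G →ₗ[ℂ] Linf G, IsRelAmenMap H E ∧ ∀ x ∈ LinfQuot H, E x = x

/-- Amenability of a discrete group: existence of a left invariant mean. -/
def GroupAmenable (K : Type*) [Group K] : Prop :=
  ∃ μ : DualLinf K, IsState μ ∧ ∀ (k : K) (y : Linf K), μ (Ltrans k y) = μ y

/-- `H`-invariance of a functional on `ℓ∞(G)`. -/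
def HInvariant (H : Subgroup G) (μ : DualLinf G) : Prop :=
  ∀ h ∈ H, ∀ x : Linf G, μ (Ltrans h x) = μ x

/-- `J` has a bounded right approximate identity contained in `S`. -/
def HasBraiIn (J S : Set (L1 G)) : Prop :=
  ∃ (ι : Type) (l : Filter ι) (e : ι → L1 G), l.NeBot ∧
    (∃ C : ℝ, ∀ i, ‖e i‖ ≤ C) ∧ (∀ i, e i ∈ S) ∧
    ∀ f ∈ J, Filter.Tendsto (fun i => ‖conv f (e i) - f‖) l (nhds 0)

lemma one'_mem_LinfQuot (H : Subgroup G) : (one' : Linf G) ∈ LinfQuot H :=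
  fun _ _ _ => rfl

lemma Ltrans_mem_LinfQuot {H : Subgroup G} {x : Linf G} (hx : x ∈ LinfQuot H) (s : G) :
    Ltrans s x ∈ LinfQuot H := by
  intro t h hh
  show x (s * (t * h)) = x (s * t)
  rw [← mul_assoc]
  exact hx (s * t) h hh

/-- `ℓ∞(G/H)` as a subspace of `ℓ∞(G)`. -/
def LinfQuotSub (H : Subgroup G) : Submodule ℂ (Linf G) where
  carrier := LinfQuot H
  add_mem' := by
    intro a b ha hb s h hh
    show (a + b : Linf G) (s * h) = (a + b : Linf G) s
    rw [lp.coeFn_add]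
    simp only [Pi.add_apply]
    rw [ha s h hh, hb s h hh]
  zero_mem' := by
    intro s h hh
    show (0 : Linf G) (s * h) = (0 : Linf G) s
    rw [lp.coeFn_zero]
    simp
  smul_mem' := by
    intro c a ha s h hh
    show (c • a : Linf G) (s * h) = (c • a : Linf G) s
    rw [lp.coeFn_smul]
    simp only [Pi.smul_apply]
    rw [ha s h hh]

/-- The weak* topology on `ℓ∞(G) = ℓ¹(G)*`: the topology induced by the
pairings against elements of `ℓ¹(G)`. -/
def weakStarTop (G : Type*) [Group G] : TopologicalSpace (Linf G) :=
  TopologicalSpace.induced (fun (y : Linf G) => fun f : L1 G => ∑' s, f s * y s)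
    Pi.topologicalSpace

@[simp] lemma one'_apply (s : G) : (one' : Linf G) s = 1 := rfl

@[simp] lemma Ltrans_one (x : Linf G) : Ltrans 1 x = x := by
  ext t
  simp

def evalₗ (t : G) : Linf G →ₗ[ℂ] ℂ where
  toFun x := x t
  map_add' _ _ := rfl
  map_smul' _ _ := rfl

@[simp] lemma evalₗ_apply (t : G) (x : Linf G) : evalₗ t x = x t := rfl

lemma tsum_apply_of_summable {ι : Type*} {v : ι → Linf G} (hv : Summable v) (t : G) :
    (∑' i, v i) t = ∑' i, v i t :=
  ((hv.hasSum.map (evalₗ t) (lp.lipschitzWith_one_eval ∞ t).continuous).tsum_eq).symm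

def starActₗ (m : DualLinf G) : Linf G →ₗ[ℂ] Linf G where
  toFun := starAct m
  map_add' x y := by
    ext s
    exact m.map_add (Ltrans s x) (Ltrans s y)
  map_smul' c x := by
    ext s
    exact m.map_smul c (Ltrans s x)

lemma summable_mul_of_norm_le (f : L1 G) {y : G → ℂ} {C : ℝ} (hy : ∀ s, ‖y s‖ ≤ C) :
    Summable fun s => f s * y s :=
  Summable.of_norm_bounded ((summable_norm f).mul_right C) fun s => by
    rw [norm_mul]
    exact mul_le_mul_of_nonneg_left (hy s) (norm_nonneg _)

lemma summable_mul_apply_Ltrans (f : L1 G) (m : DualLinf G) (x : Linf G) :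
    Summable fun s => f s * m (Ltrans s x) :=
  summable_mul_of_norm_le f fun s => (m.le_opNorm _).trans <|
    mul_le_mul_of_nonneg_left (norm_Ltrans_le s x) (norm_nonneg m)

lemma summable_smul_Ltrans (f : L1 G) (x : Linf G) (t : G) :
    Summable fun s => f s • Ltrans (s * t) x :=
  Summable.of_norm_bounded ((summable_norm f).mul_right ‖x‖) fun s => by
    rw [norm_smul]
    exact mul_le_mul_of_nonneg_left (norm_Ltrans_le _ x) (norm_nonneg _)

lemma Ltrans_rAct (x : Linf G) (f : L1 G) (t : G) :
    Ltrans t (rAct x f) = ∑' s, f s • Ltrans (s * t) x := by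
  ext u
  rw [tsum_apply_of_summable (summable_smul_Ltrans f x t)]
  simp [mul_assoc]

lemma map_Ltrans_rAct (m : DualLinf G) (x : Linf G) (f : L1 G) (t : G) :
    m (Ltrans t (rAct x f)) = ∑' s, f s * m (Ltrans (s * t) x) := by
  simp [Ltrans_rAct, m.map_tsum (summable_smul_Ltrans f x t)]

lemma map_rAct (m : DualLinf G) (x : Linf G) (f : L1 G) :
    m (rAct x f) = ∑' s, f s * m (Ltrans s x) := by
  simpa using map_Ltrans_rAct m x f 1

open Classical in
lemma hasSum_single_mul (a : G) (y : G → ℂ) :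
    HasSum (fun t => (lp.single 1 a 1 : L1 G) t * y t) (y a) := by
  convert hasSum_single a fun t ht => ?_ <;> simp_all

open Classical in
lemma eps_eq_single : (eps : L1 G) = lp.single 1 1 1 := by
  ext t
  simp [eps, Pi.single_apply]

lemma hasSum_add_smul_eps_mul {f : L1 G} {y : G → ℂ} {a : ℂ}
    (hf : HasSum (fun s => f s * y s) a) (c : ℂ) :
    HasSum (fun s => (f + c • eps : L1 G) s * y s) (a + c * y 1) := by
  classical
  convert hf.add ((hasSum_single_mul 1 y).mul_left c) using 1
  ext s
  simp only [eps_eq_single, lp.coeFn_add, lp.coeFn_smul, Pi.add_apply, Pi.smul_apply, smul_eq_mul]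
  ring

lemma memInvL_add_smul_eps_iff (m : DualLinf G) (f : L1 G) (c : ℂ) :
    memInvL m (f + c • eps) ↔ memInvL m f := by
  have hmass : ∑' s, (f + c • eps : L1 G) s = ∑' s, f s + c := by
    simpa using (hasSum_add_smul_eps_mul (y := fun _ => 1)
      (by simpa using (summable_norm f).of_norm.hasSum) c).tsum_eq
  refine forall_congr' fun x => ?_
  rw [(hasSum_add_smul_eps_mul (summable_mul_apply_Ltrans f m x).hasSum c).tsum_eq, hmass,
    Ltrans_one]
  constructor <;> intro h <;> linear_combination h

lemma memInvL_iff_memAnnL {m : DualLinf G} {f : L1 G} (hf : ∑' s, f s = 0) :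
    memInvL m f ↔ memAnnL m f := by
  simp [memInvL, memAnnL, hf]

lemma tsum_eq_zero_of_mem_J1 {H : Subgroup G} {f : L1 G} (hf : f ∈ J1 H) : ∑' s, f s = 0 := by
  simpa using hf one' (one'_mem_LinfQuot H)

open Classical in
lemma tsum_single_sub_single_mul (a b : G) (y : G → ℂ) :
    ∑' t, (lp.single 1 a 1 - lp.single 1 b 1 : L1 G) t * y t = y a - y b := by
  simpa [sub_mul] using ((hasSum_single_mul a y).sub (hasSum_single_mul b y)).tsum_eq

open Classical in
lemma single_sub_single_mem_J1 {H : Subgroup G} (s : G) {h : G} (hh : h ∈ H) :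
    (lp.single 1 (s * h) 1 - lp.single 1 s 1 : L1 G) ∈ J1 H := by
  intro y hy
  rw [tsum_single_sub_single_mul, hy s h hh, sub_self]

lemma isRelAmenMap_starActₗ {H : Subgroup G} {m : DualLinf G} (hm : IsState m)
    (hann : ∀ f ∈ J1 H, memAnnL m f) : IsRelAmenMap H (starActₗ m) := by
  refine ⟨?_, fun x hx s => hm.2 _ fun t => hx (s * t), fun x s h hh => ?_, fun x f => ?_⟩
  · ext s
    exact hm.1
  · have := hann _ (single_sub_single_mem_J1 s hh) x
    rw [tsum_single_sub_single_mul] at this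
    exact sub_eq_zero.1 this
  · ext t
    exact map_Ltrans_rAct m x f t

def reLinf (y : Linf G) : Linf G :=
  ⟨fun s => ((y s).re : ℂ), memℓp_infty ⟨‖y‖, by
    rintro _ ⟨s, rfl⟩
    simpa using (Complex.abs_re_le_norm _).trans (norm_apply_le y s)⟩⟩

def imLinf (y : Linf G) : Linf G :=
  ⟨fun s => ((y s).im : ℂ), memℓp_infty ⟨‖y‖, by
    rintro _ ⟨s, rfl⟩
    simpa using (Complex.abs_im_le_norm _).trans (norm_apply_le y s)⟩⟩

@[simp] lemma reLinf_apply (y : Linf G) (s : G) : reLinf y s = ((y s).re : ℂ) := rfl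

@[simp] lemma imLinf_apply (y : Linf G) (s : G) : imLinf y s = ((y s).im : ℂ) := rfl

lemma norm_reLinf_le (y : Linf G) : ‖reLinf y‖ ≤ ‖y‖ :=
  lp.norm_le_of_forall_le (norm_nonneg y) fun s => by
    simpa using (Complex.abs_re_le_norm _).trans (norm_apply_le y s)

lemma norm_imLinf_le (y : Linf G) : ‖imLinf y‖ ≤ ‖y‖ :=
  lp.norm_le_of_forall_le (norm_nonneg y) fun s => by
    simpa using (Complex.abs_im_le_norm _).trans (norm_apply_le y s)

lemma reLinf_add_I_smul_imLinf (y : Linf G) : reLinf y + Complex.I • imLinf y = y := by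
  ext s
  change ((y s).re : ℂ) + Complex.I * (y s).im = y s
  rw [mul_comm]
  exact Complex.re_add_im (y s)

section PositiveFunctional

variable {φ : Linf G →ₗ[ℂ] ℂ}

lemma norm_apply_le_of_im_eq_zero (hφ₁ : φ one' = 1)
    (hφ : ∀ x : Linf G, (∀ s, 0 ≤ x s) → 0 ≤ φ x) {z : Linf G} (hz : ∀ s, (z s).im = 0) :
    ‖φ z‖ ≤ ‖z‖ := by
  have hre (s : G) := abs_le.1 ((Complex.abs_re_le_norm (z s)).trans (norm_apply_le z s))
  have hplus : 0 ≤ φ ((‖z‖ : ℂ) • one' + z) := hφ _ fun s => by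
    change (0 : ℂ) ≤ ‖z‖ * 1 + z s
    simp only [mul_one, Complex.le_def, Complex.zero_re, Complex.add_re, Complex.ofReal_re,
      Complex.zero_im, Complex.add_im, Complex.ofReal_im, hz s, add_zero, and_true]
    linarith [hre s]
  have hminus : 0 ≤ φ ((‖z‖ : ℂ) • one' - z) := hφ _ fun s => by
    change (0 : ℂ) ≤ ‖z‖ * 1 - z s
    simp only [mul_one, sub_nonneg, Complex.le_def, Complex.ofReal_re, hz s, Complex.ofReal_im,
      and_true]
    linarith [hre s]
  simp only [map_add, map_sub, map_smul, hφ₁, smul_eq_mul, mul_one, Complex.le_def,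
    Complex.add_re, Complex.sub_re, Complex.add_im, Complex.sub_im, Complex.ofReal_re,
    Complex.ofReal_im, Complex.zero_re, Complex.zero_im] at hplus hminus
  rw [← Complex.abs_re_eq_norm.2 (by linarith [hplus.2]), abs_le]
  constructor <;> linarith [hplus.1, hminus.1]

lemma norm_apply_le_two_mul (hφ₁ : φ one' = 1)
    (hφ : ∀ x : Linf G, (∀ s, 0 ≤ x s) → 0 ≤ φ x) (y : Linf G) : ‖φ y‖ ≤ 2 * ‖y‖ :=
  calc ‖φ y‖ = ‖φ (reLinf y) + Complex.I * φ (imLinf y)‖ := by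
        conv_lhs => rw [← reLinf_add_I_smul_imLinf y]
        simp
    _ ≤ ‖reLinf y‖ + ‖imLinf y‖ := by
        refine (norm_add_le _ _).trans (add_le_add ?_ ?_)
        · exact norm_apply_le_of_im_eq_zero hφ₁ hφ fun s => by simp
        · simpa using norm_apply_le_of_im_eq_zero hφ₁ hφ (z := imLinf y) fun s => by simp
    _ ≤ 2 * ‖y‖ := by linarith [norm_reLinf_le y, norm_imLinf_le y]

end PositiveFunctional

namespace IsRelAmenMap

variable {H : Subgroup G} {E : Linf G →ₗ[ℂ] Linf G}

def state (hE : IsRelAmenMap H E) : DualLinf G :=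
  ((evalₗ 1).comp E).mkContinuous 2
    (norm_apply_le_two_mul (by simp [hE.1]) fun x hx => hE.2.1 x hx 1)

lemma state_apply (hE : IsRelAmenMap H E) (x : Linf G) : hE.state x = E x 1 := rfl

lemma isState_state (hE : IsRelAmenMap H E) : IsState hE.state :=
  ⟨by simp [state_apply, hE.1], fun x hx => hE.2.1 x hx 1⟩

lemma memAnnL_state (hE : IsRelAmenMap H E) {f : L1 G} (hf : f ∈ J1 H) :
    memAnnL hE.state f := fun x => by
  rw [← map_rAct, state_apply, hE.2.2.2, rAct_apply]
  simpa using hf (E x) (hE.2.2.1 x)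

end IsRelAmenMap

/-- characterizations of relative amenability of `ℓ∞(G/H)`. -/
theorem statement5 (H : Subgroup G) :
    [(∃ m : DualLinf G, IsState m ∧ ∀ f ∈ J1 H, memAnnL m f),
     (∃ m : DualLinf G, IsState m ∧ ∀ f ∈ J1 H, ∀ c : ℂ, memInvL m (f + c • eps)),
     RelAmen H].TFAE := by
  tfae_have 1 → 2 := fun ⟨m, hm, hann⟩ => ⟨m, hm, fun f hf c =>
    (memInvL_add_smul_eps_iff m f c).2
      ((memInvL_iff_memAnnL (tsum_eq_zero_of_mem_J1 hf)).2 (hann f hf))⟩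
  tfae_have 2 → 1 := fun ⟨m, hm, hinv⟩ => ⟨m, hm, fun f hf =>
    (memInvL_iff_memAnnL (tsum_eq_zero_of_mem_J1 hf)).1
      ((memInvL_add_smul_eps_iff m f 0).1 (hinv f hf 0))⟩
  tfae_have 1 → 3 := fun ⟨m, hm, hann⟩ => ⟨starActₗ m, isRelAmenMap_starActₗ hm hann⟩
  tfae_have 3 → 1 := fun ⟨E, hE⟩ => ⟨hE.state, hE.isState_state, fun _ => hE.memAnnL_state⟩
  tfae_finish

end QG
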